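/- arXiv:1407.4778 — 2 statements merged into one kernel-verified Lean document; each statement's English description precedes it below -/
import Mathlib

section
/- Let E = ((m+1)/(m+2)) t d/dt. The differential equation −q^{-1} = φ^{-1} + E(φ^{-1}), where q = −t − λ, has the unique formal power series solution φ^{-1} = λ^{-1} ∑_{i≥0} ((m+2)/(m+2+i(m+1))) (−t/λ)^i in ℚ[[t/λ]]·λ^{-1}. -/
open PowerSeries

/-!
Since `t d/dt` multiplies `tⁿ` by `n`, the operator `1 + E` acts on the `n`-th coefficient as
multiplication by `1 + n(m+1)/(m+2) = (m+2+n(m+1))/(m+2)`, which is never zero in characteristic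
zero. So `1 + E` is invertible coefficientwise, and the unique solution is obtained by dividing the
coefficients of `-q⁻¹ = (λ + t)⁻¹ = λ⁻¹ ∑ (-t/λ)ⁿ` by these factors.
-/

namespace PowerSeries

theorem coeff_add_C_mul_X_mul_derivative {R : Type*} [CommSemiring R] (c : R) (f : R⟦X⟧)
    (n : ℕ) :
    coeff n (f + C c * X * derivative R f) = (1 + c * n) * coeff n f := by
  rw [map_add, mul_assoc, coeff_C_mul]
  cases n with
  | zero => simp
  | succ k => rw [coeff_succ_X_mul, coeff_derivative]; push_cast; ring

theorem add_C_mul_X_mul_derivative_eq_iff {K : Type*} [Field K] {c : K}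
    (hc : ∀ n : ℕ, 1 + c * n ≠ 0) (f g : K⟦X⟧) :
    f + C c * X * derivative K f = g ↔ f = mk fun n => coeff n g / (1 + c * n) := by
  simp only [PowerSeries.ext_iff, coeff_add_C_mul_X_mul_derivative, coeff_mk]
  refine forall_congr' fun n => ?_
  rw [eq_div_iff (hc n), mul_comm, eq_comm]

theorem inv_C_sub_X {K : Type*} [Field K] {a : K} (ha : a ≠ 0) :
    (C a - X)⁻¹ = mk fun n => (a ^ (n + 1))⁻¹ := by
  have h := invUnitsSub_mul_sub (Units.mk0 a ha)
  rw [Units.val_mk0] at h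
  rw [PowerSeries.inv_eq_iff_mul_eq_one (by simpa using ha), ← h]
  congr 1
  ext n
  simp [coeff_invUnitsSub]

end PowerSeries

/-- With `E = ((m+1)/(m+2)) t d/dt` and `q = −t−λ` (a power series in `t`),
the differential equation `−q⁻¹ = φ⁻¹ + E(φ⁻¹)` has the unique formal power
series solution `φ⁻¹ = λ⁻¹ ∑_{i≥0} ((m+2)/(m+2+i(m+1))) (−t/λ)^i`. -/
theorem unique_solution_qde {K : Type*} [Field K] [CharZero K]
    (m : ℕ) (lam : K) (hlam : lam ≠ 0) (u : K⟦X⟧) :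
    u + C (((m : K) + 1) / ((m : K) + 2)) * X * (PowerSeries.derivative K u)
        = -(-(X + C lam))⁻¹
      ↔ u = PowerSeries.mk (fun i =>
          lam⁻¹ * (((m : K) + 2) / (((m : K) + 2) + (i : K) * ((m : K) + 1)))
            * (-lam⁻¹) ^ i) := by
  have hm : (m : K) + 2 ≠ 0 := by exact_mod_cast (m + 1).succ_ne_zero
  have hden (n : ℕ) : (m : K) + 2 + n * (m + 1) ≠ 0 := by norm_cast; omega
  have hfactor (n : ℕ) : 1 + (m + 1) / (m + 2) * (n : K) = ((m + 2) + n * (m + 1)) / (m + 2) := by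
    field_simp
  have hq : -(X + C lam) = C (-lam) - X := by rw [map_neg]; ring
  rw [hq, inv_C_sub_X (neg_ne_zero.mpr hlam),
    add_C_mul_X_mul_derivative_eq_iff (fun n => hfactor n ▸ div_ne_zero (hden n) hm)]
  refine Iff.of_eq (congrArg (u = ·) (congrArg mk (funext fun n => ?_)))
  rw [map_neg, coeff_mk, hfactor, pow_succ', mul_inv, inv_neg, ← inv_pow, inv_neg]
  field_simp
end

section
/- With notation as in the previous statement, the sum ∑_Q 1/(3Q² + 2t²)³ over the three roots Q of X³ + 2t²X + t¹ is a rational function of t¹, t² whose denominator is only the first power of the discriminant −4(2t²)³ − 27(t¹)², i.e. (−4(2t²)³ − 27(t¹)²) · ∑_Q 1/(3Q²+2t²)³ is a polynomial in t¹, t². -/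
/-- The sum `∑_Q 1/(3Q² + 2t²)³` over the three roots `Q` of `X³ + 2t²X + t¹`
has only a first-order pole in the discriminant `−4(2t²)³ − 27(t¹)²`: there is
a universal polynomial `p` in `t¹, t²` with
`(−4(2t²)³ − 27(t¹)²) · ∑_Q 1/(3Q²+2t²)³ = p(t¹, t²)`. -/
theorem disc_mul_sum_roots_inv_delta_cubed_is_polynomial :
    ∃ p : MvPolynomial (Fin 2) ℚ,
      ∀ (K : Type) [Field K] [CharZero K] (t1 t2 : K) (Q : Fin 3 → K),
        Function.Injective Q →
        (∀ i, Q i ^ 3 + 2 * t2 * Q i + t1 = 0) →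
        (-4 * (2 * t2) ^ 3 - 27 * t1 ^ 2) * ∑ i, ((3 * Q i ^ 2 + 2 * t2) ^ 3)⁻¹
          = MvPolynomial.aeval ![t1, t2] p := by
  refine ⟨MvPolynomial.C (-3), ?_⟩
  intro K _ _ t1 t2 Q hinj hroot
  have h0 := hroot 0
  have h1 := hroot 1
  have h2 := hroot 2
  have s01 : Q 0 - Q 1 ≠ 0 := sub_ne_zero.mpr (fun h => absurd (hinj h) (by decide))
  have s02 : Q 0 - Q 2 ≠ 0 := sub_ne_zero.mpr (fun h => absurd (hinj h) (by decide))
  have s12 : Q 1 - Q 2 ≠ 0 := sub_ne_zero.mpr (fun h => absurd (hinj h) (by decide))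
  have h01 : Q 0 ^ 2 + Q 0 * Q 1 + Q 1 ^ 2 + 2 * t2 = 0 := by
    have h : (Q 0 - Q 1) * (Q 0 ^ 2 + Q 0 * Q 1 + Q 1 ^ 2 + 2 * t2) = 0 := by
      linear_combination h0 - h1
    exact (mul_eq_zero.mp h).resolve_left s01
  have h02 : Q 0 ^ 2 + Q 0 * Q 2 + Q 2 ^ 2 + 2 * t2 = 0 := by
    have h : (Q 0 - Q 2) * (Q 0 ^ 2 + Q 0 * Q 2 + Q 2 ^ 2 + 2 * t2) = 0 := by
      linear_combination h0 - h2
    exact (mul_eq_zero.mp h).resolve_left s02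
  have he1 : Q 0 + Q 1 + Q 2 = 0 := by
    have h : (Q 1 - Q 2) * (Q 0 + Q 1 + Q 2) = 0 := by
      linear_combination h01 - h02
    exact (mul_eq_zero.mp h).resolve_left s12
  have ht2 : 2 * t2 = -(Q 0 ^ 2 + Q 0 * Q 1 + Q 1 ^ 2) := by linear_combination h01
  have hT2 : t2 = -(Q 0 ^ 2 + Q 0 * Q 1 + Q 1 ^ 2) / 2 := by linear_combination ht2 / 2
  have hT1 : t1 = Q 0 ^ 2 * Q 1 + Q 0 * Q 1 ^ 2 := by
    linear_combination h0 - Q 0 * ht2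
  have hq2 : Q 2 = -Q 0 - Q 1 := by linear_combination he1
  have hd0 : 3 * Q 0 ^ 2 + 2 * t2 = (Q 0 - Q 1) * (Q 0 - Q 2) := by
    linear_combination ht2 + (Q 0 - Q 1) * he1
  have hd1 : 3 * Q 1 ^ 2 + 2 * t2 = (Q 1 - Q 0) * (Q 1 - Q 2) := by
    linear_combination ht2 + (Q 1 - Q 0) * he1
  have hd2 : 3 * Q 2 ^ 2 + 2 * t2 = (Q 2 - Q 0) * (Q 2 - Q 1) := by
    linear_combination ht2 + (2 * Q 2 - Q 0 - Q 1) * he1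
  have s10 : Q 1 - Q 0 ≠ 0 := fun h => s01 (by linear_combination -h)
  have s20 : Q 2 - Q 0 ≠ 0 := fun h => s02 (by linear_combination -h)
  have s21 : Q 2 - Q 1 ≠ 0 := fun h => s12 (by linear_combination -h)
  have hd0ne : 3 * Q 0 ^ 2 + 2 * t2 ≠ 0 := hd0 ▸ mul_ne_zero s01 s02
  have hd1ne : 3 * Q 1 ^ 2 + 2 * t2 ≠ 0 := hd1 ▸ mul_ne_zero s10 s12
  have hd2ne : 3 * Q 2 ^ 2 + 2 * t2 ≠ 0 := hd2 ▸ mul_ne_zero s20 s21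
  rw [show (MvPolynomial.aeval ![t1, t2]) (MvPolynomial.C (-3 : ℚ)) = (-3 : K) by simp]
  rw [Fin.sum_univ_three]
  field_simp
  rw [hq2, hT2, hT1]
  ring
end
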